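/- Let T be a correct tree with root r and let c be a child of r (i.e., parent(c) = r). Reversing the edge: setting parent(c) = none and parent(r) = c, yields a correct tree with root c on the same vertex set. -/

import Mathlib

/-
Since the tree is weakly connected and `r` has no parent, every vertex reaches `r` by
following parents. Flipping the edge `c → r` only changes the parents of `c` and `r`, so a parent
chain from `v` to `r` either passes through `c`, where it may stop, or arrives at `r` and takes
the new edge `r → c`. Hence every vertex reaches `c`, which is the only vertex without a parent;
and each old edge survives, possibly reversed, so weak connectivity is preserved.
-/

variable {V : Type*}

/-- Iterating a parent function `p : V → Option V`: `piter p n v` is the `n`-th parent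
of `v` (or `none` if the chain has ended). -/
def piter (p : V → Option V) (n : ℕ) (v : V) : Option V := (fun o => o.bind p)^[n] (some v)

/-- A vertex is valid if some finite iteration of the parent function from it reaches a
vertex with no parent (a root). -/
def pvalid (p : V → Option V) (v : V) : Prop := ∃ n u, piter p n v = some u ∧ p u = none

/-- Weak connectivity relation of the functional digraph with edges `v → p v`. -/
def pconn (p : V → Option V) : V → V → Prop :=
  Relation.ReflTransGen (fun a b => p a = some b ∨ p b = some a)

theorem pconn_equiv (p : V → Option V) : Equivalence (pconn p) :=
  ⟨fun _ => .refl,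
   fun h => (@Relation.ReflTransGen.stdSymm _ _ ⟨fun _ _ hab => Or.symm hab⟩).symm _ _ h,
   fun h₁ h₂ => h₁.trans h₂⟩

/-- The setoid whose classes are the weakly connected components of the functional
digraph of `p`. -/
def pSetoid (p : V → Option V) : Setoid V := ⟨pconn p, pconn_equiv p⟩

lemma piter_zero (p : V → Option V) (v : V) : piter p 0 v = some v := rfl

lemma piter_succ (p : V → Option V) (n : ℕ) (v : V) :
    piter p (n + 1) v = (p v).bind (piter p n) := by
  rw [piter, Function.iterate_succ_apply, Option.bind_some]
  cases p v with
  | none => exact Function.iterate_fixed (f := fun o : Option V => o.bind p) rfl n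
  | some w => rfl

lemma piter_succ_of_eq_some {p : V → Option V} (n : ℕ) {v w : V} (h : p v = some w) :
    piter p (n + 1) v = piter p n w := by
  rw [piter_succ, h, Option.bind_some]

lemma eq_of_piter_eq_some_of_eq_none {p : V → Option V} {n : ℕ} {u v : V} (hv : p v = none)
    (h : piter p n v = some u) : v = u := by
  cases n with
  | zero => exact Option.some.inj h
  | succ n => simp [piter_succ, hv] at h

lemma exists_piter_eq_root_of_pconn {p : V → Option V} {r v : V} (hr : p r = none)
    (h : pconn p r v) : ∃ n, piter p n v = some r := by
  induction h with
  | refl => exact ⟨0, rfl⟩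
  | @tail u w _ huw ih =>
    obtain ⟨n, hn⟩ := ih
    rcases huw with huw | hwu
    · cases n with
      | zero =>
        cases Option.some.inj hn
        simp [hr] at huw
      | succ n => exact ⟨n, by rwa [piter_succ_of_eq_some n huw] at hn⟩
    · exact ⟨n + 1, by rwa [piter_succ_of_eq_some n hwu]⟩

section FlipEdge

variable [DecidableEq V]

def flipEdge (p : V → Option V) (r c : V) (v : V) : Option V :=
  if v = c then none else if v = r then some c else p v

lemma flipEdge_self (p : V → Option V) (r c : V) : flipEdge p r c c = none := if_pos rfl

lemma flipEdge_root {p : V → Option V} {r c : V} (hrc : r ≠ c) :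
    flipEdge p r c r = some c := by
  simp [flipEdge, hrc]

lemma flipEdge_of_ne {p : V → Option V} {r c v : V} (hvc : v ≠ c) (hvr : v ≠ r) :
    flipEdge p r c v = p v := by
  simp [flipEdge, hvc, hvr]

lemma exists_piter_flipEdge_eq_of_piter_eq_root {p : V → Option V} {r c : V} (hr : p r = none) :
    ∀ n v, piter p n v = some r → ∃ m, piter (flipEdge p r c) m v = some c := by
  intro n
  induction n with
  | zero =>
    intro v hv
    cases Option.some.inj hv
    by_cases hrc : r = c
    · exact ⟨0, by rw [hrc, piter_zero]⟩
    · exact ⟨1, by rw [piter_succ_of_eq_some 0 (flipEdge_root hrc), piter_zero]⟩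
  | succ n ih =>
    intro v hv
    by_cases hvc : v = c
    · exact ⟨0, by rw [hvc, piter_zero]⟩
    cases hpv : p v with
    | none => simp [piter_succ, hpv] at hv
    | some w =>
      have hvr : v ≠ r := by rintro rfl; simp [hr] at hpv
      obtain ⟨m, hm⟩ := ih w (by rwa [piter_succ_of_eq_some n hpv] at hv)
      refine ⟨m + 1, ?_⟩
      rwa [piter_succ_of_eq_some m ((flipEdge_of_ne hvc hvr).trans hpv)]

lemma flipEdge_edge {p : V → Option V} {r c : V} (hr : p r = none) (hc : p c = some r)
    {x y : V} (hxy : p x = some y) :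
    flipEdge p r c x = some y ∨ flipEdge p r c y = some x := by
  have hxr : x ≠ r := by rintro rfl; simp [hr] at hxy
  by_cases hxc : x = c
  · subst hxc
    cases Option.some.inj (hc.symm.trans hxy)
    exact Or.inr (flipEdge_root hxr.symm)
  · exact Or.inl ((flipEdge_of_ne hxc hxr).trans hxy)

lemma pconn_flipEdge {p : V → Option V} {r c : V} (hr : p r = none) (hc : p c = some r)
    {a b : V} (h : pconn p a b) : pconn (flipEdge p r c) a b :=
  Relation.ReflTransGen.mono (fun _ _ hxy => Or.elim hxy (flipEdge_edge hr hc)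
    fun hyx => (flipEdge_edge hr hc hyx).symm) _ _ h

end FlipEdge

theorem flip_root_child_general [DecidableEq V] (p : V → Option V)
    (hconn : ∀ a b, pconn p a b)
    (r : V) (hr : p r = none)
    (c : V) (hc : p c = some r) :
    ∀ p' : V → Option V, p' = (fun v => if v = c then none else if v = r then some c else p v) →
      (∀ a b, pconn p' a b) ∧ p' c = none ∧
      (∀ v, p' v = none → v = c) ∧ (∀ v, pvalid p' v) := by
  rintro p' rfl
  change (∀ a b, pconn (flipEdge p r c) a b) ∧ flipEdge p r c c = none ∧
    (∀ v, flipEdge p r c v = none → v = c) ∧ (∀ v, pvalid (flipEdge p r c) v)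
  have reach : ∀ v, ∃ m, piter (flipEdge p r c) m v = some c := fun v =>
    let ⟨n, hn⟩ := exists_piter_eq_root_of_pconn hr (hconn r v)
    exists_piter_flipEdge_eq_of_piter_eq_root hr n v hn
  refine ⟨fun a b => pconn_flipEdge hr hc (hconn a b), flipEdge_self p r c, ?_, ?_⟩
  · intro v hv
    obtain ⟨m, hm⟩ := reach v
    exact eq_of_piter_eq_some_of_eq_none hv hm
  · intro v
    obtain ⟨m, hm⟩ := reach v
    exact ⟨m, c, hm, flipEdge_self p r c⟩

/-- Flipping the edge between the root `r` of a correct tree and a child `c` of `r`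
(setting the parent of `c` to none and the parent of `r` to `c`) yields a correct tree
with root `c` on the same vertex set. -/
theorem flip_root_child [Fintype V] [DecidableEq V] (p : V → Option V)
    (hconn : ∀ a b, pconn p a b)
    (r : V) (hr : p r = none)
    (c : V) (hc : p c = some r) :
    ∀ p' : V → Option V, p' = (fun v => if v = c then none else if v = r then some c else p v) →
      (∀ a b, pconn p' a b) ∧ p' c = none ∧
      (∀ v, p' v = none → v = c) ∧ (∀ v, pvalid p' v) :=
  flip_root_child_general p hconn r hr c hc
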